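/- There do not exist a function f : ℝ → ℂ and constants C > 0, γ > 0 satisfying all of the following: (1) the function g(k) = f(k)/(1 − ik) is integrable on ℝ; (2) ∫_ℝ g(k) e^{−ikx} dk = e^{−x} for all real x ≥ 0; and (3) |f(k)| ≤ C e^{−γ|k|} for all real k. (Condition (2) is the scalar instance, with N = 1 and A(t) ≡ 1, of the LCHS formula, so this implies the nonexistence of an exponentially decaying, integrable LCHS kernel.) -/

import Mathlib

open MeasureTheory Complex

/-!
If `|f k| ≤ C e^{-γ|k|}`, then `g k = f k / (1 - i k)` decays at the same rate, so the
Fourier–Laplace transform `F z = ∫ g k e^{-ikz} dk` is holomorphic on the strip `|Im z| < γ`.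
By the LCHS identity `F = e^{-z}` on the half-line `[0, ∞)`, hence on the whole strip by the
identity theorem. But on the real line `|F x| ≤ ‖g‖₁`, whereas `e^{-x}` is unbounded as
`x → -∞`.
-/

lemma integrable_exp_neg_mul_abs {c : ℝ} (hc : 0 < c) :
    Integrable (fun x : ℝ => Real.exp (-c * |x|)) :=
  (integrable_fun_norm_addHaar volume (f := fun y => Real.exp (-c * y))).2
    (by simpa using exp_neg_integrableOn_Ioi 0 hc)

lemma abs_mul_exp_neg_mul_abs_le {δ : ℝ} (hδ : 0 < δ) (k : ℝ) :
    |k| * Real.exp (-δ * |k|) ≤ 2 / δ * Real.exp (-(δ / 2) * |k|) := by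
  have hk : |k| ≤ 2 / δ * Real.exp (δ / 2 * |k|) := by
    have := Real.add_one_le_exp (δ / 2 * |k|)
    rw [div_mul_eq_mul_div, le_div_iff₀ hδ]
    nlinarith [abs_nonneg k]
  calc |k| * Real.exp (-δ * |k|)
      ≤ 2 / δ * Real.exp (δ / 2 * |k|) * Real.exp (-δ * |k|) := by gcongr
    _ = 2 / δ * Real.exp (-(δ / 2) * |k|) := by
      rw [mul_assoc, ← Real.exp_add]; ring_nf

lemma norm_div_one_sub_I_mul_le (w : ℂ) (k : ℝ) : ‖w / (1 - I * k)‖ ≤ ‖w‖ := by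
  rw [norm_div]
  refine div_le_self (norm_nonneg w) ?_
  simpa using abs_re_le_norm (1 - I * k)

lemma isPreconnected_setOf_abs_im_lt (γ : ℝ) : IsPreconnected {z : ℂ | |z.im| < γ} := by
  have hstrip : {z : ℂ | |z.im| < γ} = {z | -γ < z.im} ∩ {z | z.im < γ} := by
    ext; simp [abs_lt]
  rw [hstrip]
  exact ((convex_halfSpace_im_gt (-γ)).inter (convex_halfSpace_im_lt γ)).isPreconnected

lemma eqOn_strip_of_eq_of_nonneg {F G : ℂ → ℂ} {γ : ℝ} (hγ : 0 < γ)
    (hF : DifferentiableOn ℂ F {z | |z.im| < γ}) (hG : DifferentiableOn ℂ G {z | |z.im| < γ})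
    (h : ∀ x : ℝ, 0 ≤ x → F x = G x) : Set.EqOn F G {z | |z.im| < γ} := by
  have hopen : IsOpen {z : ℂ | |z.im| < γ} :=
    isOpen_lt (by fun_prop) continuous_const
  have hlim : Filter.Tendsto (fun t : ℝ => (t : ℂ)) (nhdsWithin 0 (Set.Ioi 0))
      (nhdsWithin 0 {0}ᶜ) :=
    tendsto_nhdsWithin_of_tendsto_nhds_of_eventually_within _
      ((continuous_ofReal.tendsto' 0 0 ofReal_zero).mono_left nhdsWithin_le_nhds)
      (eventually_nhdsWithin_of_forall fun t ht => by simpa using ht.ne')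
  refine (hF.analyticOnNhd hopen).eqOn_of_preconnected_of_frequently_eq
    (hG.analyticOnNhd hopen) (isPreconnected_setOf_abs_im_lt γ)
    (show (0 : ℂ) ∈ {z : ℂ | |z.im| < γ} by simpa using hγ) ?_
  exact hlim.frequently (Filter.Eventually.frequently (f := nhdsWithin (0 : ℝ) (Set.Ioi 0))
    (eventually_nhdsWithin_of_forall fun t ht => h t (le_of_lt ht)))

section FourierLaplace

variable {g : ℝ → ℂ} {C γ : ℝ}

noncomputable def fourierLaplace (g : ℝ → ℂ) (z : ℂ) : ℂ :=
  ∫ k : ℝ, g k * cexp (-(I * k * z))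

lemma norm_cexp_neg_I_mul (k : ℝ) (z : ℂ) : ‖cexp (-(I * k * z))‖ = Real.exp (k * z.im) := by
  rw [norm_exp]
  congr 1
  simp [mul_re, mul_im]

lemma norm_mul_cexp_neg_I_mul_le (hg : ∀ k, ‖g k‖ ≤ C * Real.exp (-γ * |k|)) {b : ℝ}
    {z : ℂ} (hz : |z.im| ≤ b) (k : ℝ) :
    ‖g k * cexp (-(I * k * z))‖ ≤ C * Real.exp (-(γ - b) * |k|) := by
  have hexp : Real.exp (k * z.im) ≤ Real.exp (b * |k|) := by
    refine Real.exp_le_exp.mpr ?_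
    calc k * z.im ≤ |k| * |z.im| := by rw [← abs_mul]; exact le_abs_self _
      _ ≤ b * |k| := by rw [mul_comm]; gcongr
  calc ‖g k * cexp (-(I * k * z))‖ ≤ C * Real.exp (-γ * |k|) * Real.exp (b * |k|) := by
        rw [norm_mul, norm_cexp_neg_I_mul]
        exact mul_le_mul (hg k) hexp (by positivity) ((norm_nonneg _).trans (hg k))
    _ = C * Real.exp (-(γ - b) * |k|) := by
        rw [mul_assoc, ← Real.exp_add]; ring_nf

theorem hasDerivAt_fourierLaplace (hg_meas : AEStronglyMeasurable g)
    (hg : ∀ k, ‖g k‖ ≤ C * Real.exp (-γ * |k|)) {z₀ : ℂ} (hz₀ : |z₀.im| < γ) :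
    HasDerivAt (fourierLaplace g) (∫ k : ℝ, g k * (cexp (-(I * k * z₀)) * -(I * k))) z₀ := by
  set δ := (γ - |z₀.im|) / 2
  have hδ : 0 < δ := by simp only [δ]; linarith
  have him : ∀ z ∈ Metric.ball z₀ δ, |z.im| ≤ γ - δ := by
    intro z hz
    rw [Metric.mem_ball, dist_eq_norm] at hz
    have := (abs_sub_abs_le_abs_sub z.im z₀.im).trans (by simpa using abs_im_le_norm (z - z₀))
    simp only [δ] at hz ⊢
    linarith
  have hmeas : ∀ z : ℂ, AEStronglyMeasurable (fun k : ℝ => g k * cexp (-(I * k * z))) :=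
    fun z => hg_meas.mul
      (by fun_prop : Continuous fun k : ℝ => cexp (-(I * k * z))).aestronglyMeasurable
  refine (hasDerivAt_integral_of_dominated_loc_of_deriv_le
    (F' := fun z k => g k * (cexp (-(I * k * z)) * -(I * k)))
    (bound := fun k => C * (2 / δ) * Real.exp (-(δ / 2) * |k|))
    (Metric.ball_mem_nhds z₀ hδ) (.of_forall hmeas) ?_ ?_ ?_ ?_ ?_).2
  · exact ((integrable_exp_neg_mul_abs (sub_pos.mpr hz₀)).const_mul C).mono' (hmeas z₀)
      (.of_forall (norm_mul_cexp_neg_I_mul_le hg le_rfl))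
  · exact hg_meas.mul
      (by fun_prop : Continuous fun k : ℝ => cexp (-(I * k * z₀)) * -(I * k)).aestronglyMeasurable
  · refine .of_forall fun k z hz => ?_
    have hC : 0 ≤ C := nonneg_of_mul_nonneg_left ((norm_nonneg _).trans (hg 0)) (by positivity)
    calc ‖g k * (cexp (-(I * k * z)) * -(I * k))‖
        ≤ C * Real.exp (-(γ - (γ - δ)) * |k|) * |k| := by
          rw [← mul_assoc, norm_mul, norm_neg, norm_mul I, norm_I, one_mul, norm_real,
            Real.norm_eq_abs]
          gcongr
          exact norm_mul_cexp_neg_I_mul_le hg (him z hz) k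
      _ = C * (|k| * Real.exp (-δ * |k|)) := by ring_nf
      _ ≤ C * (2 / δ * Real.exp (-(δ / 2) * |k|)) :=
          mul_le_mul_of_nonneg_left (abs_mul_exp_neg_mul_abs_le hδ k) hC
      _ = C * (2 / δ) * Real.exp (-(δ / 2) * |k|) := by ring
  · exact (integrable_exp_neg_mul_abs (half_pos hδ)).const_mul _
  · refine .of_forall fun k z _ => ?_
    simpa only [id, mul_one, neg_mul] using
      ((hasDerivAt_id z).const_mul (-(I * k))).cexp.const_mul (g k)

theorem differentiableOn_fourierLaplace (hg_meas : AEStronglyMeasurable g)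
    (hg : ∀ k, ‖g k‖ ≤ C * Real.exp (-γ * |k|)) :
    DifferentiableOn ℂ (fourierLaplace g) {z | |z.im| < γ} := fun _ hz =>
  (hasDerivAt_fourierLaplace hg_meas hg hz).differentiableAt.differentiableWithinAt

lemma norm_fourierLaplace_ofReal_le (g : ℝ → ℂ) (x : ℝ) :
    ‖fourierLaplace g x‖ ≤ ∫ k : ℝ, ‖g k‖ :=
  (norm_integral_le_integral_norm _).trans_eq <| by
    simp only [norm_mul, norm_cexp_neg_I_mul, ofReal_im, mul_zero, Real.exp_zero, mul_one]

end FourierLaplace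

/-- **No exponentially decaying integrable LCHS kernel (Proposition `constraint`).**
There is no function `f : ℝ → ℂ` with constants `C, γ > 0` such that
`g k = f k / (1 - i k)` is integrable, the scalar LCHS identity
`∫ g k e^{-i k x} dk = e^{-x}` holds for all `x ≥ 0`, and `|f k| ≤ C e^{-γ |k|}`
for all real `k`. -/
theorem no_exponentially_decaying_integrable_kernel :
    ¬ ∃ (f : ℝ → ℂ) (C γ : ℝ), 0 < C ∧ 0 < γ ∧
      Integrable (fun k : ℝ => f k / (1 - Complex.I * k)) ∧
      (∀ x : ℝ, 0 ≤ x →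
        (∫ k : ℝ, (f k / (1 - Complex.I * k)) * Complex.exp (-(Complex.I * k * x))) =
          Complex.exp (-x)) ∧
      (∀ k : ℝ, ‖f k‖ ≤ C * Real.exp (-γ * |k|)) := by
  rintro ⟨f, C, γ, -, hγ, hInt, hLCHS, hf⟩
  set g : ℝ → ℂ := fun k => f k / (1 - I * k)
  have hg : ∀ k, ‖g k‖ ≤ C * Real.exp (-γ * |k|) :=
    fun k => (norm_div_one_sub_I_mul_le (f k) k).trans (hf k)
  have hEq : Set.EqOn (fourierLaplace g) (fun z => cexp (-z)) {z | |z.im| < γ} :=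
    eqOn_strip_of_eq_of_nonneg hγ (differentiableOn_fourierLaplace hInt.aestronglyMeasurable hg)
      (by fun_prop) hLCHS
  set M := ∫ k : ℝ, ‖g k‖
  have hM : Real.exp M ≤ M := by
    have h := norm_fourierLaplace_ofReal_le g (-M)
    rw [hEq (show |((-M : ℝ) : ℂ).im| < γ by simpa using hγ), norm_exp] at h
    simpa using h
  linarith [Real.add_one_le_exp M]
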